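/- Fix a finite state space S, rates q, a constant C₀ > 0 and a time horizon t > 0. There exists a constant C (depending only on S, the rates, C₀ and t) such that the following holds for every N: let B̂ be an N×N matrix with nonnegative entries and ‖B̂‖₂ ≤ C₀, and let ẑ, z̃ : [0,t] → ([0,1]^S)^N be two solutions of the NIMFA system with matrix B̂ (with possibly different initial conditions). Then, setting Δ̃*_i(t) = sup_{0 ≤ τ ≤ t} max_{s ∈ S} |ẑ_{i,s}(τ) − z̃_{i,s}(τ)|, one has (1/N)·Σ_{i=1}^{N} Δ̃*_i(t)² ≤ C·(1/N)·Σ_{i=1}^{N} max_{s ∈ S} (ẑ_{i,s}(0) − z̃_{i,s}(0))². -/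

import Mathlib

/-!
Let `u_i = ∑_s |ẑ_{i,s} - z̃_{i,s}|`. With the field `λ = B̂ ẑ` frozen, the part of the difference
of the NIMFA right-hand sides at node `i` that is linear in `ẑ_i - z̃_i` is driven by the generator
`q_{s'→s} + ∑_s̃ λ_s̃ q_{s̃;s'→s}`, and generators do not increase ℓ¹ norms; the rest is at most
`K (B̂ u)_i` with `K = ∑ |q_{s̃;s'→s}|`, because `z̃ ∈ [0,1]`. So `u_i` has right derivative at most
`K (B̂ u)_i`. On a window `[a, a + h]` with `h K C₀ ≤ 1/2`, the vector `P` of suprema of `u` over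
the window satisfies `P ≤ u(a) + h K B̂ P`, hence `‖P‖₂ ≤ ‖u(a)‖₂ + ‖P‖₂ / 2`. Chaining
`m = ⌈2 t K C₀⌉ + 1` windows gives a majorant of `sup_τ u(τ)` of ℓ² norm at most `3^m ‖u(0)‖₂`,
and `‖u(0)‖₂² ≤ |S|² ∑_i max_s (ẑ_{i,s}(0) - z̃_{i,s}(0))²`.
-/

open Finset

/-- The ℓ²→ℓ² operator (spectral) norm of a real square matrix. -/
noncomputable def opNorm2 {N : ℕ} (M : Matrix (Fin N) (Fin N) ℝ) : ℝ :=
  ‖LinearMap.toContinuousLinearMap (Matrix.toEuclideanLin M)‖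

/-- Right-hand side of the NIMFA ODE system for the state `z : Fin N → S → ℝ`:
`(d/dt) z_{i,s} = Σ_{s'} q_{s'→s} z_{i,s'} + Σ_{s',s̃} q_{s̃;s'→s} z_{i,s'}·(B z_{·,s̃})_i`,
where `qs s' s = q_{s'→s}` and `qi s̃ s' s = q_{s̃;s'→s}`. -/
def nimfaRHS {S : Type*} [Fintype S] {N : ℕ} (qs : S → S → ℝ) (qi : S → S → S → ℝ)
    (B : Matrix (Fin N) (Fin N) ℝ) (z : Fin N → S → ℝ) (i : Fin N) (s : S) : ℝ :=
  (∑ s', qs s' s * z i s') +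
    ∑ s', ∑ st, qi st s' s * z i s' * (∑ j, B i j * z j st)

open Set

section Generator

variable {S : Type*} [Fintype S]

def IsGenerator (q : S → S → ℝ) : Prop :=
  (∀ s s', s ≠ s' → 0 ≤ q s s') ∧ ∀ s, ∑ s', q s s' = 0

lemma isGenerator_of_eq_neg_sum [DecidableEq S] {q : S → S → ℝ}
    (hoff : ∀ s s', s ≠ s' → 0 ≤ q s s') (hdiag : ∀ s, q s s = -∑ s' ∈ univ \ {s}, q s s') :
    IsGenerator q :=
  ⟨hoff, fun s => by
    rw [Finset.sum_eq_add_sum_sdiff_singleton_of_mem (mem_univ s), hdiag, neg_add_cancel]⟩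

lemma IsGenerator.add_sum_mul {q : S → S → ℝ} {r : S → S → S → ℝ} (hq : IsGenerator q)
    (hr : ∀ st, IsGenerator (r st)) {c : S → ℝ} (hc : ∀ st, 0 ≤ c st) :
    IsGenerator fun s' s => q s' s + ∑ st, r st s' s * c st := by
  refine ⟨fun s' s hne => add_nonneg (hq.1 s' s hne)
    (Finset.sum_nonneg fun st _ => mul_nonneg ((hr st).1 s' s hne) (hc st)), fun s' => ?_⟩
  rw [Finset.sum_add_distrib, hq.2, zero_add, Finset.sum_comm]
  simp only [← Finset.sum_mul, (hr _).2, zero_mul, Finset.sum_const_zero]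

/-- ℓ¹-dissipativity: `σ` is a subgradient of the ℓ¹ norm at `Δ`. -/
lemma IsGenerator.sum_mul_sum_mul_nonpos {q : S → S → ℝ} (hq : IsGenerator q)
    {σ Δ : S → ℝ} (hσ : ∀ s, |σ s| ≤ 1) (hσΔ : ∀ s, σ s * Δ s = |Δ s|) :
    ∑ s, σ s * ∑ s', q s' s * Δ s' ≤ 0 := by
  have hterm : ∀ s s', σ s * (q s' s * Δ s') ≤ q s' s * |Δ s'| := by
    intro s s'
    rcases eq_or_ne s' s with rfl | hne
    · rw [← hσΔ]; ring_nf; rfl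
    · calc σ s * (q s' s * Δ s') = q s' s * (σ s * Δ s') := by ring
        _ ≤ q s' s * |Δ s'| := by
          refine mul_le_mul_of_nonneg_left ?_ (hq.1 s' s hne)
          calc σ s * Δ s' ≤ |σ s| * |Δ s'| := by rw [← abs_mul]; exact le_abs_self _
            _ ≤ |Δ s'| := mul_le_of_le_one_left (abs_nonneg _) (hσ s)
  calc ∑ s, σ s * ∑ s', q s' s * Δ s' = ∑ s, ∑ s', σ s * (q s' s * Δ s') := by
        simp only [Finset.mul_sum]
    _ ≤ ∑ s, ∑ s', q s' s * |Δ s'| :=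
        Finset.sum_le_sum fun s _ => Finset.sum_le_sum fun s' _ => hterm s s'
    _ = ∑ s', (∑ s, q s' s) * |Δ s'| := by rw [Finset.sum_comm]; simp only [Finset.sum_mul]
    _ = 0 := by simp [hq.2]

end Generator

lemma exists_hasDerivWithinAt_Ici_abs {φ : ℝ → ℝ} {d x : ℝ} (h : HasDerivAt φ d x) :
    ∃ σ : ℝ, |σ| ≤ 1 ∧ σ * φ x = |φ x| ∧
      HasDerivWithinAt (fun y => |φ y|) (σ * d) (Ici x) x := by
  have abs_sign_le_one : ∀ y : ℝ, |(SignType.sign y : ℝ)| ≤ 1 := fun y => by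
    rcases lt_trichotomy y 0 with hy | rfl | hy <;> simp [sign_neg, sign_pos, *]
  by_cases hx : φ x = 0
  · refine ⟨SignType.sign d, abs_sign_le_one d, by simp [hx], ?_⟩
    rw [sign_mul_self, hasDerivWithinAt_iff_tendsto_slope, Ici_sdiff_left]
    have hslope := (hasDerivAt_iff_tendsto_slope.1 h).mono_left
      (nhdsWithin_mono x fun _ hy => ne_of_gt hy)
    refine hslope.abs.congr' ?_
    filter_upwards [self_mem_nhdsWithin] with y hy
    rw [slope_def_field, slope_def_field, hx, abs_zero, sub_zero, sub_zero, abs_div,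
      abs_of_pos (sub_pos.2 hy)]
  · exact ⟨SignType.sign (φ x), abs_sign_le_one _, sign_mul_self _,
      ((hasDerivAt_abs hx).comp x h).hasDerivWithinAt⟩

lemma le_add_sub_mul_of_hasDerivWithinAt_Ici_le {f : ℝ → ℝ} {a b E : ℝ}
    (hf : ContinuousOn f (Icc a b))
    (hf' : ∀ x ∈ Ico a b, ∃ f', HasDerivWithinAt f f' (Ici x) x ∧ f' ≤ E) :
    ∀ x ∈ Icc a b, f x ≤ f a + (x - a) * E := by
  choose! f' hderiv hle using hf'
  have hline : ∀ x, HasDerivAt (fun y => f a + (y - a) * E) E x := fun x => by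
    simpa using (((hasDerivAt_id x).sub_const a).mul_const E).const_add (f a)
  exact image_le_of_deriv_right_le_deriv_boundary hf hderiv (by simp)
    (fun x _ => (hline x).continuousAt.continuousWithinAt)
    (fun x _ => (hline x).hasDerivWithinAt) hle

lemma EuclideanSpace.norm_le_norm_of_nonneg_of_le {ι : Type*} [Fintype ι]
    {v w : EuclideanSpace ℝ ι} (h₀ : ∀ i, 0 ≤ v i) (h : ∀ i, v i ≤ w i) : ‖v‖ ≤ ‖w‖ := by
  simp only [EuclideanSpace.norm_eq, Real.norm_eq_abs, sq_abs]
  gcongr with i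
  · exact h₀ i
  · exact h i

lemma norm_toEuclideanLin_le {N : ℕ} (B : Matrix (Fin N) (Fin N) ℝ)
    (v : EuclideanSpace ℝ (Fin N)) : ‖Matrix.toEuclideanLin B v‖ ≤ opNorm2 B * ‖v‖ :=
  (LinearMap.toContinuousLinearMap (Matrix.toEuclideanLin B)).le_opNorm v

section Chaining

variable {N : ℕ} {B : Matrix (Fin N) (Fin N) ℝ} {K C₀ t : ℝ} {u : ℝ → EuclideanSpace ℝ (Fin N)}

/-- The integrated form, on every window `[a, b] ⊆ [0, t]`, of `u' ≤ K B u`, where on the right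
`u` may be replaced by any majorant `w` of `u` on the window. -/
def IncrementsBoundedBy (K : ℝ) (B : Matrix (Fin N) (Fin N) ℝ) (t : ℝ)
    (u : ℝ → EuclideanSpace ℝ (Fin N)) : Prop :=
  ∀ a b, 0 ≤ a → b ≤ t → ∀ w : EuclideanSpace ℝ (Fin N), (∀ τ ∈ Ico a b, ∀ j, u τ j ≤ w j) →
    ∀ τ ∈ Icc a b, ∀ i, u τ i ≤ u a i + (τ - a) * (K * ∑ j, B i j * w j)

lemma exists_majorant_on_Icc_add_of_increments (hB : ∀ i j, 0 ≤ B i j)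
    (hBn : opNorm2 B ≤ C₀) (hK : 0 ≤ K) (hu : ∀ τ ∈ Icc 0 t, ∀ i, 0 ≤ u τ i)
    (hbdd : ∀ i, BddAbove ((fun τ => u τ i) '' Icc 0 t)) (hinc : IncrementsBoundedBy K B t u)
    {a h : ℝ} (ha : 0 ≤ a) (hh : 0 ≤ h) (hat : a + h ≤ t) (hsmall : h * K * C₀ ≤ 1 / 2) :
    ∃ P : EuclideanSpace ℝ (Fin N), (∀ i, 0 ≤ P i) ∧
      (∀ τ ∈ Icc a (a + h), ∀ i, u τ i ≤ P i) ∧ ‖P‖ ≤ 2 * ‖u a‖ := by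
  have hsub : Icc a (a + h) ⊆ Icc 0 t := Icc_subset_Icc ha hat
  have haa : a ∈ Icc a (a + h) := ⟨le_rfl, by linarith⟩
  set P : EuclideanSpace ℝ (Fin N) :=
    WithLp.toLp 2 fun i => sSup ((fun τ => u τ i) '' Icc a (a + h))
  have hle : ∀ τ ∈ Icc a (a + h), ∀ i, u τ i ≤ P i := fun τ hτ i =>
    le_csSup ((hbdd i).mono (image_mono hsub)) (mem_image_of_mem _ hτ)
  have hP₀ : ∀ i, 0 ≤ P i := fun i => (hu a (hsub haa) i).trans (hle a haa i)
  have hP : ∀ i, P i ≤ (u a + (h * K) • Matrix.toEuclideanLin B P) i := by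
    intro i
    refine csSup_le (Set.nonempty_Icc.2 haa.2 |>.image _) ?_
    rintro _ ⟨τ, hτ, rfl⟩
    have hBP : 0 ≤ K * ∑ j, B i j * P j :=
      mul_nonneg hK (Finset.sum_nonneg fun j _ => mul_nonneg (hB i j) (hP₀ j))
    calc u τ i ≤ u a i + (τ - a) * (K * ∑ j, B i j * P j) :=
          hinc a (a + h) ha hat P (fun τ hτ => hle τ (Ico_subset_Icc_self hτ)) τ hτ i
      _ ≤ u a i + h * (K * ∑ j, B i j * P j) := by gcongr; linarith [hτ.2]
      _ = (u a + (h * K) • Matrix.toEuclideanLin B P) i := by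
          simp [Matrix.mulVec, dotProduct, mul_assoc]
  have hBP : ‖Matrix.toEuclideanLin B P‖ ≤ C₀ * ‖P‖ :=
    (norm_toEuclideanLin_le B P).trans (mul_le_mul_of_nonneg_right hBn (norm_nonneg P))
  have hhK : 0 ≤ h * K := mul_nonneg hh hK
  have : ‖P‖ ≤ ‖u a‖ + h * K * (C₀ * ‖P‖) :=
    calc ‖P‖ ≤ ‖u a + (h * K) • Matrix.toEuclideanLin B P‖ :=
          EuclideanSpace.norm_le_norm_of_nonneg_of_le hP₀ hP
      _ ≤ ‖u a‖ + h * K * ‖Matrix.toEuclideanLin B P‖ := by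
          refine (norm_add_le _ _).trans ?_
          rw [norm_smul, Real.norm_of_nonneg hhK]
      _ ≤ ‖u a‖ + h * K * (C₀ * ‖P‖) := by gcongr
  exact ⟨P, hP₀, hle, by nlinarith [norm_nonneg P]⟩

lemma exists_majorant_on_Icc_nat_mul_of_increments (hB : ∀ i j, 0 ≤ B i j)
    (hBn : opNorm2 B ≤ C₀) (hK : 0 ≤ K) (hu : ∀ τ ∈ Icc 0 t, ∀ i, 0 ≤ u τ i)
    (hbdd : ∀ i, BddAbove ((fun τ => u τ i) '' Icc 0 t)) (hinc : IncrementsBoundedBy K B t u)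
    {h : ℝ} (hh : 0 ≤ h) (hsmall : h * K * C₀ ≤ 1 / 2) (k : ℕ) (hk : k * h ≤ t) :
    ∃ v : EuclideanSpace ℝ (Fin N), (∀ i, 0 ≤ v i) ∧
      (∀ τ ∈ Icc 0 (k * h), ∀ i, u τ i ≤ v i) ∧ ‖v‖ ≤ 3 ^ k * ‖u 0‖ := by
  induction k with
  | zero =>
    refine ⟨u 0, hu 0 ⟨le_rfl, by simpa using hk⟩, fun τ hτ i => ?_, by simp⟩
    obtain rfl : τ = 0 := by simpa using hτ
    exact le_rfl
  | succ k ih =>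
    push_cast at hk ⊢
    have hkh : 0 ≤ k * h := by positivity
    obtain ⟨v, hv₀, hv, hvn⟩ := ih (by nlinarith)
    obtain ⟨P, hP₀, hP, hPn⟩ := exists_majorant_on_Icc_add_of_increments hB hBn hK hu hbdd hinc
      hkh hh (by linarith) hsmall
    have hukh : ‖u (k * h)‖ ≤ ‖v‖ := EuclideanSpace.norm_le_norm_of_nonneg_of_le
      (hu _ ⟨hkh, by nlinarith⟩) (hv _ ⟨hkh, le_rfl⟩)
    refine ⟨v + P, fun i => add_nonneg (hv₀ i) (hP₀ i), fun τ hτ i => ?_, ?_⟩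
    · rw [PiLp.add_apply]
      rcases le_total τ (k * h) with hτk | hτk
      · linarith [hv τ ⟨hτ.1, hτk⟩ i, hP₀ i]
      · linarith [hP τ ⟨hτk, by linarith [hτ.2]⟩ i, hv₀ i]
    · calc ‖v + P‖ ≤ ‖v‖ + ‖P‖ := norm_add_le v P
        _ ≤ 3 * ‖v‖ := by linarith
        _ ≤ 3 ^ (k + 1) * ‖u 0‖ := by rw [pow_succ', mul_assoc]; gcongr

lemma exists_majorant_of_increments (hB : ∀ i j, 0 ≤ B i j) (hBn : opNorm2 B ≤ C₀)
    (hK : 0 ≤ K) (hu : ∀ τ ∈ Icc 0 t, ∀ i, 0 ≤ u τ i)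
    (hbdd : ∀ i, BddAbove ((fun τ => u τ i) '' Icc 0 t)) (hinc : IncrementsBoundedBy K B t u)
    (ht : 0 ≤ t) :
    ∃ v : EuclideanSpace ℝ (Fin N), (∀ τ ∈ Icc 0 t, ∀ i, u τ i ≤ v i) ∧
      ‖v‖ ≤ 3 ^ (⌈2 * t * K * C₀⌉₊ + 1) * ‖u 0‖ := by
  set m := ⌈2 * t * K * C₀⌉₊ + 1
  have hm : (0 : ℝ) < m := by positivity
  have hmt : (m : ℝ) * (t / m) = t := mul_div_cancel₀ t hm.ne'
  have hsmall : t / m * K * C₀ ≤ 1 / 2 := by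
    have : 2 * t * K * C₀ ≤ m := by
      simp only [m, Nat.cast_add, Nat.cast_one]; linarith [Nat.le_ceil (2 * t * K * C₀)]
    rw [div_mul_eq_mul_div, div_mul_eq_mul_div, div_le_iff₀ hm]
    linarith
  obtain ⟨v, -, hv, hvn⟩ := exists_majorant_on_Icc_nat_mul_of_increments hB hBn hK hu hbdd hinc
    (by positivity) hsmall m hmt.le
  exact ⟨v, hmt ▸ hv, hvn⟩

end Chaining

lemma sq_sum_abs_le_card_sq_mul_iSup_sq {S : Type*} [Fintype S] (f : S → ℝ) :
    (∑ s, |f s|) ^ 2 ≤ (Fintype.card S : ℝ) ^ 2 * ⨆ s, f s ^ 2 := by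
  have hsum : ∑ s, f s ^ 2 ≤ Fintype.card S * ⨆ s, f s ^ 2 := by
    simpa using Finset.sum_le_card_nsmul Finset.univ (fun s => f s ^ 2) _
      fun s _ => le_ciSup (Set.finite_range fun s => f s ^ 2).bddAbove s
  calc (∑ s, |f s|) ^ 2 ≤ Fintype.card S * ∑ s, f s ^ 2 := by
        simpa using sq_sum_le_card_mul_sum_sq (s := Finset.univ) (f := fun s => |f s|)
    _ ≤ Fintype.card S * (Fintype.card S * ⨆ s, f s ^ 2) := by gcongr
    _ = (Fintype.card S : ℝ) ^ 2 * ⨆ s, f s ^ 2 := by ring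

section Nimfa

variable {S : Type*} [Fintype S] {qs : S → S → ℝ} {qi : S → S → S → ℝ}
  {N : ℕ} {B : Matrix (Fin N) (Fin N) ℝ}

def interactionRateSum (qi : S → S → S → ℝ) : ℝ := ∑ s, ∑ s', ∑ st, |qi st s' s|

lemma interactionRateSum_nonneg (qi : S → S → S → ℝ) : 0 ≤ interactionRateSum qi := by
  unfold interactionRateSum; positivity

lemma nimfaRHS_sub_nimfaRHS (z₁ z₂ : Fin N → S → ℝ) (i : Fin N) (s : S) :
    nimfaRHS qs qi B z₁ i s - nimfaRHS qs qi B z₂ i s =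
      ∑ s', (qs s' s + ∑ st, qi st s' s * ∑ j, B i j * z₁ j st) * (z₁ i s' - z₂ i s') +
        ∑ s', ∑ st, qi st s' s * z₂ i s' * ∑ j, B i j * (z₁ j st - z₂ j st) := by
  have hB : ∀ st, ∑ j, B i j * (z₁ j st - z₂ j st) =
      ∑ j, B i j * z₁ j st - ∑ j, B i j * z₂ j st := fun st => by
    simp only [mul_sub, Finset.sum_sub_distrib]
  simp only [nimfaRHS, ← Finset.sum_add_distrib, ← Finset.sum_sub_distrib]
  refine Finset.sum_congr rfl fun s' _ => ?_
  rw [add_mul, Finset.sum_mul, add_sub_add_comm, ← Finset.sum_sub_distrib, add_assoc,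
    ← Finset.sum_add_distrib]
  congr 1
  · ring
  · exact Finset.sum_congr rfl fun st _ => by rw [hB]; ring

lemma sum_mul_nimfaRHS_sub_le (hqs : IsGenerator qs) (hqi : ∀ st, IsGenerator (qi st))
    (hB : ∀ i j, 0 ≤ B i j) {z₁ z₂ : Fin N → S → ℝ} (hz₁ : ∀ j s, 0 ≤ z₁ j s) {i : Fin N}
    (hz₂ : ∀ s, |z₂ i s| ≤ 1) {σ : S → ℝ} (hσ : ∀ s, |σ s| ≤ 1)
    (hσΔ : ∀ s, σ s * (z₁ i s - z₂ i s) = |z₁ i s - z₂ i s|) :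
    ∑ s, σ s * (nimfaRHS qs qi B z₁ i s - nimfaRHS qs qi B z₂ i s) ≤
      interactionRateSum qi * ∑ j, B i j * ∑ s, |z₁ j s - z₂ j s| := by
  set W := ∑ j, B i j * ∑ s, |z₁ j s - z₂ j s|
  have hlin := (hqs.add_sum_mul hqi (c := fun st => ∑ j, B i j * z₁ j st) fun st =>
    Finset.sum_nonneg fun j _ => mul_nonneg (hB i j) (hz₁ j st)).sum_mul_sum_mul_nonpos hσ hσΔ
  have hBΔ : ∀ st, |∑ j, B i j * (z₁ j st - z₂ j st)| ≤ W := fun st => by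
    refine (Finset.abs_sum_le_sum_abs _ _).trans (Finset.sum_le_sum fun j _ => ?_)
    rw [abs_mul, abs_of_nonneg (hB i j)]
    exact mul_le_mul_of_nonneg_left
      (Finset.single_le_sum (fun s _ => abs_nonneg (z₁ j s - z₂ j s)) (Finset.mem_univ st))
      (hB i j)
  have hrem : ∀ s s' st, σ s * (qi st s' s * z₂ i s' * ∑ j, B i j * (z₁ j st - z₂ j st)) ≤
      |qi st s' s| * W := fun s s' st => by
    refine (le_abs_self _).trans ?_
    rw [abs_mul, abs_mul, abs_mul]
    calc |σ s| * (|qi st s' s| * |z₂ i s'| * |∑ j, B i j * (z₁ j st - z₂ j st)|)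
        ≤ 1 * (|qi st s' s| * 1 * W) := by gcongr <;> simp_all
      _ = |qi st s' s| * W := by ring
  calc ∑ s, σ s * (nimfaRHS qs qi B z₁ i s - nimfaRHS qs qi B z₂ i s)
      = ∑ s, σ s * ∑ s', (qs s' s + ∑ st, qi st s' s * ∑ j, B i j * z₁ j st) *
            (z₁ i s' - z₂ i s') +
          ∑ s, ∑ s', ∑ st, σ s * (qi st s' s * z₂ i s' * ∑ j, B i j * (z₁ j st - z₂ j st)) := by
        simp only [nimfaRHS_sub_nimfaRHS, mul_add, Finset.sum_add_distrib, Finset.mul_sum]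
    _ ≤ 0 + ∑ s, ∑ s', ∑ st, |qi st s' s| * W :=
        add_le_add hlin (Finset.sum_le_sum fun s _ => Finset.sum_le_sum fun s' _ =>
          Finset.sum_le_sum fun st _ => hrem s s' st)
    _ = interactionRateSum qi * W := by
        simp only [interactionRateSum, zero_add, Finset.sum_mul]

lemma exists_hasDerivWithinAt_sum_abs_sub_le (hqs : IsGenerator qs)
    (hqi : ∀ st, IsGenerator (qi st)) (hB : ∀ i j, 0 ≤ B i j) {z₁ z₂ : ℝ → Fin N → S → ℝ}
    {x : ℝ} {i : Fin N} (hz₁ : ∀ j s, 0 ≤ z₁ x j s) (hz₂ : ∀ s, |z₂ x i s| ≤ 1)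
    (hd₁ : ∀ s, HasDerivAt (fun τ => z₁ τ i s) (nimfaRHS qs qi B (z₁ x) i s) x)
    (hd₂ : ∀ s, HasDerivAt (fun τ => z₂ τ i s) (nimfaRHS qs qi B (z₂ x) i s) x) :
    ∃ f', HasDerivWithinAt (fun τ => ∑ s, |z₁ τ i s - z₂ τ i s|) f' (Ici x) x ∧
      f' ≤ interactionRateSum qi * ∑ j, B i j * ∑ s, |z₁ x j s - z₂ x j s| := by
  choose σ hσ hσΔ hderiv using fun s => exists_hasDerivWithinAt_Ici_abs ((hd₁ s).sub (hd₂ s))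
  exact ⟨_, HasDerivWithinAt.fun_sum fun s _ => hderiv s,
    sum_mul_nimfaRHS_sub_le hqs hqi hB hz₁ hz₂ hσ hσΔ⟩

def nodeDist (z₁ z₂ : Fin N → S → ℝ) : EuclideanSpace ℝ (Fin N) :=
  WithLp.toLp 2 fun i => ∑ s, |z₁ i s - z₂ i s|

lemma incrementsBoundedBy_nodeDist (hqs : IsGenerator qs) (hqi : ∀ st, IsGenerator (qi st))
    (hB : ∀ i j, 0 ≤ B i j) {t : ℝ} {z₁ z₂ : ℝ → Fin N → S → ℝ}
    (hz₁ : ∀ τ ∈ Icc (0:ℝ) t, ∀ i s, z₁ τ i s ∈ Icc (0:ℝ) 1)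
    (hz₂ : ∀ τ ∈ Icc (0:ℝ) t, ∀ i s, z₂ τ i s ∈ Icc (0:ℝ) 1)
    (hd₁ : ∀ τ ∈ Icc (0:ℝ) t, ∀ i s,
      HasDerivAt (fun u => z₁ u i s) (nimfaRHS qs qi B (z₁ τ) i s) τ)
    (hd₂ : ∀ τ ∈ Icc (0:ℝ) t, ∀ i s,
      HasDerivAt (fun u => z₂ u i s) (nimfaRHS qs qi B (z₂ τ) i s) τ) :
    IncrementsBoundedBy (interactionRateSum qi) B t fun τ => nodeDist (z₁ τ) (z₂ τ) := by
  intro a b ha hb w hw τ hτ i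
  have hsub : Icc a b ⊆ Icc 0 t := Icc_subset_Icc ha hb
  refine le_add_sub_mul_of_hasDerivWithinAt_Ici_le (f := fun τ => ∑ s, |z₁ τ i s - z₂ τ i s|)
    ?_ (fun x hx => ?_) τ hτ
  · exact continuousOn_finsetSum _ fun s _ x hx =>
      (((hd₁ x (hsub hx) i s).sub (hd₂ x (hsub hx) i s)).continuousAt.abs).continuousWithinAt
  · have hxt := hsub (Ico_subset_Icc_self hx)
    obtain ⟨f', hderiv, hle⟩ := exists_hasDerivWithinAt_sum_abs_sub_le hqs hqi hB
      (fun j s => (hz₁ x hxt j s).1)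
      (fun s => abs_le.2 ⟨by linarith [(hz₂ x hxt i s).1], (hz₂ x hxt i s).2⟩)
      (hd₁ x hxt i) (hd₂ x hxt i)
    refine ⟨f', hderiv, hle.trans ?_⟩
    have := interactionRateSum_nonneg qi
    gcongr with j _
    · exact hB i j
    · exact hw x hx j

lemma nodeDist_le_card {z₁ z₂ : Fin N → S → ℝ} (hz₁ : ∀ i s, z₁ i s ∈ Icc (0:ℝ) 1)
    (hz₂ : ∀ i s, z₂ i s ∈ Icc (0:ℝ) 1) (i : Fin N) : nodeDist z₁ z₂ i ≤ Fintype.card S := by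
  have hΔ : ∀ s, |z₁ i s - z₂ i s| ≤ 1 := fun s => abs_sub_le_iff.2
    ⟨by linarith [(hz₁ i s).2, (hz₂ i s).1], by linarith [(hz₁ i s).1, (hz₂ i s).2]⟩
  simpa [nodeDist] using Finset.sum_le_card_nsmul Finset.univ _ 1 fun s _ => hΔ s

lemma norm_nodeDist_sq_le (z₁ z₂ : Fin N → S → ℝ) :
    ‖nodeDist z₁ z₂‖ ^ 2 ≤ (Fintype.card S : ℝ) ^ 2 * ∑ i, ⨆ s, (z₁ i s - z₂ i s) ^ 2 := by
  simp only [nodeDist, EuclideanSpace.norm_sq_eq, Real.norm_eq_abs, sq_abs, Finset.mul_sum]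
  exact Finset.sum_le_sum fun i _ => sq_sum_abs_le_card_sq_mul_iSup_sq _

lemma sum_sq_iSup_le_norm_sq_of_nodeDist_le [Nonempty S] {t : ℝ} (ht : 0 ≤ t)
    {z₁ z₂ : ℝ → Fin N → S → ℝ} {v : EuclideanSpace ℝ (Fin N)}
    (hv : ∀ τ ∈ Icc 0 t, ∀ i, nodeDist (z₁ τ) (z₂ τ) i ≤ v i) :
    ∑ i, (⨆ τ : Icc (0:ℝ) t, ⨆ s : S, |z₁ τ i s - z₂ τ i s|) ^ 2 ≤ ‖v‖ ^ 2 := by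
  have : Nonempty (Icc (0:ℝ) t) := ⟨⟨0, le_rfl, ht⟩⟩
  simp only [EuclideanSpace.norm_sq_eq, Real.norm_eq_abs, sq_abs]
  refine Finset.sum_le_sum fun i _ => pow_le_pow_left₀
    (Real.iSup_nonneg fun τ => Real.iSup_nonneg fun s => abs_nonneg _)
    (ciSup_le fun τ => ciSup_le fun s => ?_) 2
  exact (Finset.single_le_sum (fun s _ => abs_nonneg (z₁ τ i s - z₂ τ i s))
    (Finset.mem_univ s)).trans (hv τ τ.2 i)

lemma exists_majorant_nodeDist_of_nimfa (hqs : IsGenerator qs)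
    (hqi : ∀ st, IsGenerator (qi st)) (hB : ∀ i j, 0 ≤ B i j) {C₀ t : ℝ}
    (hBn : opNorm2 B ≤ C₀) (ht : 0 ≤ t) {z₁ z₂ : ℝ → Fin N → S → ℝ}
    (hz₁ : ∀ τ ∈ Icc (0:ℝ) t, ∀ i s, z₁ τ i s ∈ Icc (0:ℝ) 1)
    (hz₂ : ∀ τ ∈ Icc (0:ℝ) t, ∀ i s, z₂ τ i s ∈ Icc (0:ℝ) 1)
    (hd₁ : ∀ τ ∈ Icc (0:ℝ) t, ∀ i s,
      HasDerivAt (fun u => z₁ u i s) (nimfaRHS qs qi B (z₁ τ) i s) τ)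
    (hd₂ : ∀ τ ∈ Icc (0:ℝ) t, ∀ i s,
      HasDerivAt (fun u => z₂ u i s) (nimfaRHS qs qi B (z₂ τ) i s) τ) :
    ∃ v : EuclideanSpace ℝ (Fin N), (∀ τ ∈ Icc 0 t, ∀ i, nodeDist (z₁ τ) (z₂ τ) i ≤ v i) ∧
      ‖v‖ ≤ 3 ^ (⌈2 * t * interactionRateSum qi * C₀⌉₊ + 1) * ‖nodeDist (z₁ 0) (z₂ 0)‖ :=
  exists_majorant_of_increments hB hBn (interactionRateSum_nonneg qi)
    (fun _ _ _ => Finset.sum_nonneg fun _ _ => abs_nonneg _)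
    (fun i => ⟨Fintype.card S, by
      rintro _ ⟨τ, hτ, rfl⟩
      exact nodeDist_le_card (hz₁ τ hτ) (hz₂ τ hτ) i⟩)
    (incrementsBoundedBy_nodeDist hqs hqi hB hz₁ hz₂ hd₁ hd₂) ht

end Nimfa

theorem stmt_3_general (S : Type) [Fintype S] [DecidableEq S] [Nonempty S]
    (qs : S → S → ℝ) (qi : S → S → S → ℝ)
    (hqs : ∀ s' s, s' ≠ s → 0 ≤ qs s' s)
    (hqsd : ∀ s, qs s s = -∑ s' ∈ Finset.univ \ {s}, qs s s')
    (hqi : ∀ st s' s, s' ≠ s → 0 ≤ qi st s' s)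
    (hqid : ∀ st s, qi st s s = -∑ s' ∈ Finset.univ \ {s}, qi st s s')
    (C₀ t : ℝ) (ht : 0 < t) :
    ∃ C : ℝ, 0 < C ∧
      ∀ (N : ℕ) (Bhat : Matrix (Fin N) (Fin N) ℝ),
        (∀ i j, 0 ≤ Bhat i j) → opNorm2 Bhat ≤ C₀ →
        ∀ (zhat ztil : ℝ → Fin N → S → ℝ),
        -- the trajectories take values in [0,1]
        (∀ τ ∈ Set.Icc (0:ℝ) t, ∀ i s, zhat τ i s ∈ Set.Icc (0:ℝ) 1) →
        (∀ τ ∈ Set.Icc (0:ℝ) t, ∀ i s, ztil τ i s ∈ Set.Icc (0:ℝ) 1) →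
        -- both solve NIMFA with matrix `Bhat`
        (∀ τ ∈ Set.Icc (0:ℝ) t, ∀ i s,
          HasDerivAt (fun u => zhat u i s) (nimfaRHS qs qi Bhat (zhat τ) i s) τ) →
        (∀ τ ∈ Set.Icc (0:ℝ) t, ∀ i s,
          HasDerivAt (fun u => ztil u i s) (nimfaRHS qs qi Bhat (ztil τ) i s) τ) →
        (1 / N) * ∑ i,
            (⨆ τ : Set.Icc (0:ℝ) t, ⨆ s : S, |zhat τ i s - ztil τ i s|) ^ 2 ≤
          C * ((1 / N) * ∑ i, (⨆ s : S, (zhat 0 i s - ztil 0 i s) ^ 2)) := by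
  set L : ℝ := 3 ^ (⌈2 * t * interactionRateSum qi * C₀⌉₊ + 1)
  refine ⟨(Fintype.card S * L) ^ 2, by positivity, ?_⟩
  intro N Bhat hB hBn zhat ztil hz₁ hz₂ hd₁ hd₂
  obtain ⟨v, hv, hvn⟩ := exists_majorant_nodeDist_of_nimfa
    (isGenerator_of_eq_neg_sum hqs hqsd) (fun st => isGenerator_of_eq_neg_sum (hqi st) (hqid st))
    hB hBn ht.le hz₁ hz₂ hd₁ hd₂
  have hN : (0 : ℝ) ≤ 1 / N := by positivity
  calc (1 / N) * ∑ i, (⨆ τ : Icc (0:ℝ) t, ⨆ s : S, |zhat τ i s - ztil τ i s|) ^ 2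
      ≤ (1 / N) * ‖v‖ ^ 2 :=
        mul_le_mul_of_nonneg_left (sum_sq_iSup_le_norm_sq_of_nodeDist_le ht.le hv) hN
    _ ≤ (1 / N) * (L * ‖nodeDist (zhat 0) (ztil 0)‖) ^ 2 := by gcongr
    _ ≤ (1 / N) * (L ^ 2 * ((Fintype.card S : ℝ) ^ 2 *
          ∑ i, ⨆ s, (zhat 0 i s - ztil 0 i s) ^ 2)) := by
        rw [mul_pow]; gcongr; exact norm_nodeDist_sq_le _ _
    _ = (Fintype.card S * L) ^ 2 * ((1 / N) * ∑ i, ⨆ s, (zhat 0 i s - ztil 0 i s) ^ 2) := by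
        ring

/-- Fix a finite state space `S`, rates `q`, a constant `C₀ > 0` and a time
horizon `t > 0`.  There is a constant `C` (depending only on `S`, the rates, `C₀` and `t`) such
that for all `N`, every nonnegative `N×N` matrix `B̂` with `‖B̂‖₂ ≤ C₀`, and any two
`[0,1]`-valued solutions `ẑ, z̃` of the NIMFA system with matrix `B̂` (possibly different
initial conditions), one has
`(1/N)·Σ_i (sup_{0≤τ≤t} max_s |ẑ_{i,s}(τ) − z̃_{i,s}(τ)|)² ≤ C·(1/N)·Σ_i max_s (ẑ_{i,s}(0) − z̃_{i,s}(0))²`. -/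
theorem stmt_3 (S : Type) [Fintype S] [DecidableEq S] [Nonempty S]
    (qs : S → S → ℝ) (qi : S → S → S → ℝ)
    (hqs : ∀ s' s, s' ≠ s → 0 ≤ qs s' s)
    (hqsd : ∀ s, qs s s = -∑ s' ∈ Finset.univ \ {s}, qs s s')
    (hqi : ∀ st s' s, s' ≠ s → 0 ≤ qi st s' s)
    (hqid : ∀ st s, qi st s s = -∑ s' ∈ Finset.univ \ {s}, qi st s s')
    (C₀ t : ℝ) (hC₀ : 0 < C₀) (ht : 0 < t) :
    ∃ C : ℝ, 0 < C ∧
      ∀ (N : ℕ) (Bhat : Matrix (Fin N) (Fin N) ℝ),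
        (∀ i j, 0 ≤ Bhat i j) → opNorm2 Bhat ≤ C₀ →
        ∀ (zhat ztil : ℝ → Fin N → S → ℝ),
        -- the trajectories take values in [0,1]
        (∀ τ ∈ Set.Icc (0:ℝ) t, ∀ i s, zhat τ i s ∈ Set.Icc (0:ℝ) 1) →
        (∀ τ ∈ Set.Icc (0:ℝ) t, ∀ i s, ztil τ i s ∈ Set.Icc (0:ℝ) 1) →
        -- both solve NIMFA with matrix `Bhat`
        (∀ τ ∈ Set.Icc (0:ℝ) t, ∀ i s,
          HasDerivAt (fun u => zhat u i s) (nimfaRHS qs qi Bhat (zhat τ) i s) τ) →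
        (∀ τ ∈ Set.Icc (0:ℝ) t, ∀ i s,
          HasDerivAt (fun u => ztil u i s) (nimfaRHS qs qi Bhat (ztil τ) i s) τ) →
        (1 / N) * ∑ i,
            (⨆ τ : Set.Icc (0:ℝ) t, ⨆ s : S, |zhat τ i s - ztil τ i s|) ^ 2 ≤
          C * ((1 / N) * ∑ i, (⨆ s : S, (zhat 0 i s - ztil 0 i s) ^ 2)) :=
  stmt_3_general S qs qi hqs hqsd hqi hqid C₀ t ht
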